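/- Let {f_n}_{n≥0} be a sequence of Puiseux polynomials with deg(f_i) > 0 for i ≥ 1 such that Σ_{n=1}^∞ deg(f_n) converges to a finite value. For each n let B_{ϖ_n} be the set of elements of Ĥ whose continued fraction begins with f₀, …, f_n. Then ⋂_{n=1}^∞ B_{ϖ_n} = ∅. -/

import Mathlib

universe u

/-- Evaluation of a finite continued fraction `[f₀, f₁, …, f_N]` in a field,
`cfEval [a] = a`, `cfEval (a :: l) = a + (cfEval l)⁻¹` (with the convention `0⁻¹ = 0`). -/
def cfEval {L : Type u} [Field L] : List L → L
  | [] => 0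
  | a :: l => a + (cfEval l)⁻¹

/-- The Moebius maps `ρ_n = σ_n ∘ ⋯ ∘ σ_0`, where `σ_i x = (x - f_i)⁻¹`. -/
def rho {L : Type u} [Field L] (f : ℕ → L) : ℕ → L → L
  | 0, x => (x - f 0)⁻¹
  | n + 1, x => (rho f n x - f (n + 1))⁻¹

/-- The derivative `ρ_n'` of `ρ_n`, computed by the chain rule from
`σ_i'(x) = -((x - f_i)⁻¹)²`. -/
def rho' {L : Type u} [Field L] (f : ℕ → L) : ℕ → L → L
  | 0, x => -((x - f 0)⁻¹) ^ 2
  | n + 1, x => -((rho f n x - f (n + 1))⁻¹) ^ 2 * rho' f n x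

/-- An abstract presentation of the completion `K̂` of the Puiseux field
`E⟨⟨t⁻¹⟩⟩` over a field `E`.  The field `K` carries an additive valuation
`ν` with values in `ℚ` on nonzero elements (normalized by `ν (t^r) = -r`,
where `mono r` plays the role of the monomial `t^r`), the subfield `E` is
embedded via `emb`, the simple "Laurent Puiseux polynomials" (the ring
generated by `E` and all rational powers of `t`) are dense, and `K` is
complete for `ν`. -/
structure PuiseuxCompletion (E : Type u) [Field E] where
  K : Type u
  [fieldK : Field K]
  ν : K → ℚ
  emb : E →+* K
  mono : ℚ → K
  mono_zero : mono 0 = 1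
  mono_mul : ∀ r s : ℚ, mono r * mono s = mono (r + s)
  ν_mono : ∀ r : ℚ, ν (mono r) = -r
  ν_emb : ∀ e : E, e ≠ 0 → ν (emb e) = 0
  ν_mul : ∀ x y : K, x ≠ 0 → y ≠ 0 → ν (x * y) = ν x + ν y
  ν_add : ∀ x y : K, x ≠ 0 → y ≠ 0 → x + y ≠ 0 → min (ν x) (ν y) ≤ ν (x + y)
  dense' : ∀ z : K, ∀ C : ℚ,
    ∃ f ∈ Subring.closure (Set.range emb ∪ Set.range mono), z = f ∨ C < ν (z - f)
  complete' : ∀ uSeq : ℕ → K,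
    (∀ C : ℚ, ∃ N : ℕ, ∀ m ≥ N, ∀ n ≥ N, uSeq m = uSeq n ∨ C < ν (uSeq m - uSeq n)) →
    ∃ z : K, ∀ C : ℚ, ∃ N : ℕ, ∀ n ≥ N, uSeq n = z ∨ C < ν (uSeq n - z)

attribute [instance] PuiseuxCompletion.fieldK

namespace PuiseuxCompletion

variable {E : Type u} [Field E] (P : PuiseuxCompletion E)

/-- The ring `Ā = E⟨t⟩` of Puiseux polynomials: finite `E`-linear combinations of
nonnegative rational powers of `t`. -/
def Abar : Subring P.K :=
  Subring.closure (Set.range P.emb ∪ P.mono '' {r : ℚ | 0 ≤ r})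

/-- `deg f = -ν f`. -/
def deg (f : P.K) : ℚ := -P.ν f

/-- The rational Puiseux field `k̃ = Quot(Ā) = ⋃ₙ E(t^{1/n})`, as a subfield of `K̂`. -/
def ktilde : Subfield P.K := Subfield.closure (P.Abar : Set P.K)

/-- `uSeq n → z` with respect to the valuation `ν`. -/
def TendsTo (uSeq : ℕ → P.K) (z : P.K) : Prop :=
  ∀ C : ℚ, ∃ N : ℕ, ∀ n ≥ N, uSeq n = z ∨ C < P.ν (uSeq n - z)

/-- One step of the continued fraction algorithm succeeds at index `i`:
`f i` is the Puiseux polynomial with `ν (z_i - f i) > 0`, the fraction does not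
end at `i` (`z_i ≠ f i`), and `z_{i+1} = (z_i - f i)⁻¹`. -/
def CFStep (f zs : ℕ → P.K) (i : ℕ) : Prop :=
  f i ∈ P.Abar ∧ 0 < P.ν (zs i - f i) ∧ zs i ≠ f i ∧ zs (i + 1) = (zs i - f i)⁻¹

/-- The `n`-th approximant `x_n = [f₀, …, f_n]_{ev}`. -/
def approx (f : ℕ → P.K) (n : ℕ) : P.K :=
  cfEval (List.ofFn fun i : Fin (n + 1) => f i)

/-- The continued fraction of `z` begins with the coefficients `f 0, …, f n`. -/
def CFBegins (f : ℕ → P.K) (n : ℕ) (z : P.K) : Prop :=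
  ∃ zs : ℕ → P.K, zs 0 = z ∧ (∀ i < n, P.CFStep f zs i) ∧
    f n ∈ P.Abar ∧ (zs n = f n ∨ 0 < P.ν (zs n - f n))

/-- `z` is the value of the continued fraction expression with coefficients `f`
and length `L` (finite or infinite); the coefficients are Puiseux polynomials of
positive degree after the zeroth one. -/
def CFExprEval (f : ℕ → P.K) (L : WithTop ℕ) (z : P.K) : Prop :=
  f 0 ∈ P.Abar ∧
  (∀ i : ℕ, 1 ≤ i → (i : WithTop ℕ) ≤ L → f i ∈ P.Abar ∧ 0 < P.deg (f i)) ∧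
  ((∃ N : ℕ, L = (N : WithTop ℕ) ∧ z = P.approx f N) ∨
    (L = ⊤ ∧ P.TendsTo (fun n => P.approx f n) z))

/-- The equivalence relation `(a, r) ~ (a', r')` iff `r = r'` and `ν (a - a') ≥ r`
(the pairs define the same Berkovich point `η_{a,r}` of type II or III). -/
def ballEquiv (p q : P.K × ℝ) : Prop :=
  p.2 = q.2 ∧ (p.1 = q.1 ∨ p.2 ≤ (P.ν (p.1 - q.1) : ℝ))

open scoped Classical in
/-- The Berkovich hyperbolic distance, computed on representatives. -/
noncomputable def berkDist (p q : P.K × ℝ) : ℝ :=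
  if p.1 = q.1 ∨ min p.2 q.2 ≤ (P.ν (p.1 - q.1) : ℝ) then |p.2 - q.2|
  else p.2 + q.2 - 2 * (P.ν (p.1 - q.1) : ℝ)

/-- The closed ball `B_a^{[r]} = {b : ν (b - a) ≥ r}` corresponding to `η_{a,r}`. -/
def closedBall (a : P.K) (r : ℝ) : Set P.K :=
  {b : P.K | b = a ∨ r ≤ (P.ν (b - a) : ℝ)}

/-- The Moebius transformation associated to a `2 × 2` matrix. -/
def mob (g : Matrix (Fin 2) (Fin 2) P.K) (x : P.K) : P.K :=
  (g 0 0 * x + g 0 1) / (g 1 0 * x + g 1 1)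

/-- The ring `A_M = E[t^{1/M}]`. -/
def AM (M : ℕ) : Subring P.K :=
  Subring.closure (Set.range P.emb ∪ {P.mono (1 / (M : ℚ))})

/-- The field `E(t^{1/M})`, whose `ν`-completion inside `K̂` is `K_M = E((t^{-1/M}))`. -/
def kM (M : ℕ) : Subfield P.K :=
  Subfield.closure (Set.range P.emb ∪ {P.mono (1 / (M : ℚ))})

end PuiseuxCompletion

/-! Suppose `z` lies in every `B_{ϖ_n}`, with complete quotients `z_n`. Then
`d_n := ν (z_n - f_n) = deg f_{n+1}`, so `Σ d_n < ∞`. Approximate `z` by a Laurent Puiseux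
polynomial `g` with `ν (z - g) > 2 Σ d_n`. Since `(x - f)⁻¹ - (y - f)⁻¹` has valuation
`ν (x - y) - 2 ν (x - f)` when `y` is closer to `x` than `f` is, the complete quotients of
`z` and `g` stay close forever, so the continued fraction of `g` never terminates either. But `g`
is a rational function of `t^{1/M}` for some `M`, on which the continued fraction algorithm is
the Euclidean algorithm: the degree of the denominator drops at every step. -/

namespace PuiseuxCompletion

open Polynomial Finset

variable {E : Type u} [Field E] (P : PuiseuxCompletion E)

section Valuation

lemma mono_ne_zero (r : ℚ) : P.mono r ≠ 0 := by
  intro h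
  have h1 : P.mono r * P.mono (-r) = 1 := by rw [P.mono_mul, add_neg_cancel, P.mono_zero]
  simp [h] at h1

lemma mono_pow (r : ℚ) (n : ℕ) : P.mono r ^ n = P.mono (n * r) := by
  induction n with
  | zero => simp [P.mono_zero]
  | succ n ih =>
    rw [pow_succ, ih, P.mono_mul]
    push_cast
    ring_nf

lemma ν_one : P.ν 1 = 0 := by
  simpa [P.mono_zero] using P.ν_mono 0

lemma ν_inv {x : P.K} (hx : x ≠ 0) : P.ν x⁻¹ = -P.ν x := by
  have h := P.ν_mul x x⁻¹ hx (inv_ne_zero hx)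
  rw [mul_inv_cancel₀ hx, P.ν_one] at h
  linarith

lemma ν_div {x y : P.K} (hx : x ≠ 0) (hy : y ≠ 0) : P.ν (x / y) = P.ν x - P.ν y := by
  rw [div_eq_mul_inv, P.ν_mul _ _ hx (inv_ne_zero hy), P.ν_inv hy, sub_eq_add_neg]

lemma ν_neg {x : P.K} (hx : x ≠ 0) : P.ν (-x) = P.ν x := by
  have h1 : P.ν (-1 : P.K) = 0 := by
    have h := P.ν_mul (-1) (-1) (by norm_num) (by norm_num)
    rw [neg_mul_neg, one_mul, P.ν_one] at h
    linarith
  rw [← neg_one_mul, P.ν_mul _ _ (by norm_num) hx, h1, zero_add]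

lemma ν_sub_comm (x y : P.K) : P.ν (x - y) = P.ν (y - x) := by
  rcases eq_or_ne x y with rfl | h
  · rfl
  · rw [← neg_sub, P.ν_neg (sub_ne_zero.2 h.symm)]

lemma ν_add_of_lt {x y : P.K} (hx : x ≠ 0) (hy : y ≠ 0) (h : P.ν x < P.ν y) :
    x + y ≠ 0 ∧ P.ν (x + y) = P.ν x := by
  have hne : x + y ≠ 0 := by
    intro h0
    rw [eq_neg_of_add_eq_zero_left h0, P.ν_neg hy] at h
    exact lt_irrefl _ h
  refine ⟨hne, le_antisymm ?_ ?_⟩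
  · have h2 := P.ν_add (x + y) (-y) hne (neg_ne_zero.2 hy) (by rwa [add_neg_cancel_right])
    rw [add_neg_cancel_right, P.ν_neg hy] at h2
    exact (min_le_iff.1 h2).resolve_right (not_le.2 h)
  · simpa [min_eq_left h.le] using P.ν_add x y hx hy hne

lemma ν_sub_eq_of_lt {x y a : P.K} (hxa : x ≠ a) (hxy : x ≠ y)
    (h : P.ν (x - a) < P.ν (x - y)) : y ≠ a ∧ P.ν (y - a) = P.ν (x - a) := by
  rw [P.ν_sub_comm x y] at h
  obtain ⟨hne, hν⟩ := P.ν_add_of_lt (sub_ne_zero.2 hxa) (sub_ne_zero.2 hxy.symm) h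
  rw [sub_add_sub_cancel'] at hne hν
  exact ⟨sub_ne_zero.1 hne, hν⟩

lemma ν_inv_sub_inv {u v : P.K} (hu : u ≠ 0) (hv : v ≠ 0) (huv : u ≠ v) :
    P.ν (u⁻¹ - v⁻¹) = P.ν (u - v) - P.ν u - P.ν v := by
  rw [inv_sub_inv hu hv, P.ν_div (sub_ne_zero.2 huv.symm) (mul_ne_zero hu hv),
    P.ν_mul _ _ hu hv, P.ν_sub_comm]
  ring

end Valuation

section PuiseuxPolynomials

noncomputable def ev (M : ℕ) : E[X] →+* P.K :=
  eval₂RingHom P.emb (P.mono (1 / M))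

lemma ev_C (M : ℕ) (e : E) : P.ev M (C e) = P.emb e := eval₂_C _ _

lemma ev_X_pow (M n : ℕ) : P.ev M (X ^ n) = P.mono (n / M) := by
  rw [ev, coe_eval₂RingHom, eval₂_X_pow, P.mono_pow, mul_one_div]

lemma ev_ne_zero_and_ν_ev {M : ℕ} (hM : 0 < M) {p : E[X]} (hp : p ≠ 0) :
    P.ev M p ≠ 0 ∧ P.ν (P.ev M p) = -(p.natDegree / M) := by
  induction hn : p.natDegree using Nat.strong_induction_on generalizing p with
  | _ n ih =>
  have hc : p.leadingCoeff ≠ 0 := leadingCoeff_ne_zero.2 hp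
  have hlead : P.ev M (monomial n p.leadingCoeff) ≠ 0 ∧
      P.ν (P.ev M (monomial n p.leadingCoeff)) = -(n / M) := by
    rw [ev, coe_eval₂RingHom, eval₂_monomial, P.mono_pow, mul_one_div]
    have he : P.emb p.leadingCoeff ≠ 0 := (map_ne_zero P.emb).2 hc
    refine ⟨mul_ne_zero he (P.mono_ne_zero _), ?_⟩
    rw [P.ν_mul _ _ he (P.mono_ne_zero _), P.ν_emb _ hc, P.ν_mono, zero_add]
  have hsplit := p.eraseLead_add_monomial_natDegree_leadingCoeff
  rw [hn] at hsplit
  rw [← hsplit, map_add]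
  rcases eq_or_ne p.eraseLead 0 with h0 | he
  · simpa [h0] using hlead
  have hlt : p.eraseLead.natDegree < n :=
    hn ▸ (p.eraseLead_natDegree_lt_or_eraseLead_eq_zero).resolve_right he
  obtain ⟨hne, hν⟩ := ih _ hlt he rfl
  have hMQ : (0 : ℚ) < M := by exact_mod_cast hM
  obtain ⟨hsum, hνsum⟩ := P.ν_add_of_lt hlead.1 hne (by
    rw [hlead.2, hν, neg_lt_neg_iff]
    exact div_lt_div_of_pos_right (by exact_mod_cast hlt) hMQ)
  rw [add_comm]
  exact ⟨hsum, hνsum.trans hlead.2⟩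

lemma ev_ne_zero {M : ℕ} (hM : 0 < M) {p : E[X]} (hp : p ≠ 0) : P.ev M p ≠ 0 :=
  (P.ev_ne_zero_and_ν_ev hM hp).1

lemma ν_ev {M : ℕ} (hM : 0 < M) {p : E[X]} (hp : p ≠ 0) :
    P.ν (P.ev M p) = -(p.natDegree / M) :=
  (P.ev_ne_zero_and_ν_ev hM hp).2

lemma ev_mem_Abar (M : ℕ) (p : E[X]) : P.ev M p ∈ P.Abar := by
  have hgen : ∀ e : E, P.emb e ∈ P.Abar := fun e => Subring.subset_closure (Or.inl ⟨e, rfl⟩)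
  induction p using Polynomial.induction_on with
  | C a => rw [P.ev_C]; exact hgen a
  | add p q hp hq => rw [map_add]; exact add_mem hp hq
  | monomial n a _ =>
    rw [map_mul, P.ev_C, P.ev_X_pow]
    exact mul_mem (hgen a)
      (Subring.subset_closure (Or.inr ⟨_, by simp only [Set.mem_ofPred_eq]; positivity, rfl⟩))

lemma ev_eq_ev_comp_X_pow (M : ℕ) {k : ℕ} (hk : 0 < k) (p : E[X]) :
    P.ev M p = P.ev (M * k) (p.comp (X ^ k)) := by
  rw [ev, ev, coe_eval₂RingHom, coe_eval₂RingHom, eval₂_comp, eval₂_X_pow, P.mono_pow]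
  congr 2
  have hk' : (k : ℚ) ≠ 0 := by positivity
  push_cast
  rw [mul_one_div, mul_comm (M : ℚ), ← div_div, div_self hk']

lemma range_ev_le_range_ev_mul (M : ℕ) {k : ℕ} (hk : 0 < k) :
    (P.ev M).range ≤ (P.ev (M * k)).range := by
  rintro _ ⟨p, rfl⟩
  exact ⟨_, (P.ev_eq_ev_comp_X_pow M hk p).symm⟩

lemma exists_ev_of_mem_Abar {x : P.K} (hx : x ∈ P.Abar) :
    ∃ M, 0 < M ∧ ∃ p : E[X], x = P.ev M p := by
  have hdir : Directed (· ≤ ·) fun M : ℕ+ => (P.ev M).range := fun M N =>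
    ⟨M * N, by simpa using P.range_ev_le_range_ev_mul M N.pos,
      by simpa [mul_comm] using P.range_ev_le_range_ev_mul N M.pos⟩
  have hle : P.Abar ≤ ⨆ M : ℕ+, (P.ev M).range := by
    refine Subring.closure_le.2 ?_
    rintro _ (⟨e, rfl⟩ | ⟨r, hr, rfl⟩)
    · exact le_iSup (fun M : ℕ+ => (P.ev M).range) 1 ⟨C e, P.ev_C _ e⟩
    · refine le_iSup (fun M : ℕ+ => (P.ev M).range) ⟨r.den, r.den_pos⟩
        ⟨X ^ r.num.toNat, ?_⟩
      have hnum : ((r.num.toNat : ℕ) : ℚ) = r.num := by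
        exact_mod_cast Int.toNat_of_nonneg (Rat.num_nonneg.2 hr)
      rw [P.ev_X_pow, PNat.mk_coe, hnum, Rat.num_div_den]
  obtain ⟨M, p, rfl⟩ := (Subring.mem_iSup_of_directed hdir).1 (hle hx)
  exact ⟨M, M.pos, p, rfl⟩

lemma ν_nonpos_of_mem_Abar {x : P.K} (hx : x ∈ P.Abar) (h0 : x ≠ 0) : P.ν x ≤ 0 := by
  obtain ⟨M, hM, p, rfl⟩ := P.exists_ev_of_mem_Abar hx
  rw [P.ν_ev hM (by rintro rfl; exact h0 (map_zero _)), neg_nonpos]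
  positivity

lemma eq_of_ν_sub_pos {x a b : P.K} (ha : a ∈ P.Abar) (hb : b ∈ P.Abar) (hxa : x ≠ a)
    (hxb : x ≠ b) (hνa : 0 < P.ν (x - a)) (hνb : 0 < P.ν (x - b)) : a = b := by
  by_contra hab
  have hsum : (x - a) + (b - x) = b - a := by ring
  have hba : b - a ≠ 0 := sub_ne_zero.2 (Ne.symm hab)
  have hmin := P.ν_add _ _ (sub_ne_zero.2 hxa) (sub_ne_zero.2 (Ne.symm hxb)) (hsum ▸ hba)
  rw [hsum, P.ν_sub_comm b x] at hmin
  exact (P.ν_nonpos_of_mem_Abar (sub_mem hb ha) hba).not_gt ((lt_min hνa hνb).trans_le hmin)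

lemma mem_ktilde_of_mem_closure {x : P.K}
    (hx : x ∈ Subring.closure (Set.range P.emb ∪ Set.range P.mono)) : x ∈ P.ktilde := by
  have hmono : ∀ r : ℚ, 0 ≤ r → P.mono r ∈ P.ktilde := fun r hr =>
    Subfield.subset_closure (Subring.subset_closure (Or.inr ⟨r, hr, rfl⟩))
  refine Subring.closure_le (t := P.ktilde.toSubring).2 ?_ hx
  rintro _ (⟨e, rfl⟩ | ⟨r, rfl⟩)
  · exact Subfield.subset_closure (Subring.subset_closure (Or.inl ⟨e, rfl⟩))
  · rcases le_or_gt 0 r with hr | hr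
    · exact hmono r hr
    · rw [show P.mono r = (P.mono (-r))⁻¹ from
        eq_inv_of_mul_eq_one_left (by rw [P.mono_mul, add_neg_cancel, P.mono_zero])]
      exact P.ktilde.inv_mem (hmono (-r) (by linarith))

lemma exists_ev_div_of_mem_ktilde {x : P.K} (hx : x ∈ P.ktilde) :
    ∃ M, 0 < M ∧ ∃ p q : E[X], q ≠ 0 ∧ x = P.ev M p / P.ev M q := by
  obtain ⟨y, hy, w, hw, rfl⟩ := Subfield.mem_closure_iff.1 hx
  rw [Subring.closure_eq] at hy hw
  obtain ⟨M₁, hM₁, p, rfl⟩ := P.exists_ev_of_mem_Abar hy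
  obtain ⟨M₂, hM₂, q, rfl⟩ := P.exists_ev_of_mem_Abar hw
  rcases eq_or_ne (P.ev M₂ q) 0 with h0 | h0
  · exact ⟨1, one_pos, 0, 1, one_ne_zero, by simp [h0]⟩
  refine ⟨M₁ * M₂, by positivity, p.comp (X ^ M₂), q.comp (X ^ M₁), ?_, ?_⟩
  · rintro hq
    rw [P.ev_eq_ev_comp_X_pow M₂ hM₁, mul_comm, hq, map_zero] at h0
    exact h0 rfl
  · rw [P.ev_eq_ev_comp_X_pow M₁ hM₂ p, P.ev_eq_ev_comp_X_pow M₂ hM₁ q, mul_comm M₂]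

end PuiseuxPolynomials

section ContinuedFractions

variable {L : Type*} [Field L]

/-- The complete quotients `z_n` of `x` (the `zs` of `CFStep`) for prescribed partial
quotients `f`. -/
def cfRem (f : ℕ → L) (x : L) : ℕ → L
  | 0 => x
  | n + 1 => (cfRem f x n - f n)⁻¹

def HasInfiniteCF (f : ℕ → P.K) (x : P.K) : Prop :=
  ∀ n, cfRem f x n ≠ f n ∧ 0 < P.ν (cfRem f x n - f n)

variable {P}

lemma hasInfiniteCF_of_forall_cfBegins {f : ℕ → P.K} {z : P.K} (h : ∀ n, P.CFBegins f n z) :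
    P.HasInfiniteCF f z := by
  intro n
  obtain ⟨zs, hzs0, hstep, -⟩ := h (n + 1)
  have hzs : ∀ i ≤ n, zs i = cfRem f z i := by
    intro i hi
    induction i with
    | zero => exact hzs0
    | succ i ih => rw [(hstep i (by omega)).2.2.2, ih (by omega)]; rfl
  obtain ⟨-, hpos, hne, -⟩ := hstep n n.lt_succ_self
  rw [hzs n le_rfl] at hpos hne
  exact ⟨hne, hpos⟩

lemma HasInfiniteCF.deg_succ {f : ℕ → P.K} {x : P.K} (h : P.HasInfiniteCF f x) (n : ℕ) :
    P.deg (f (n + 1)) = P.ν (cfRem f x n - f n) := by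
  have hinv : P.ν (cfRem f x (n + 1)) = -P.ν (cfRem f x n - f n) :=
    P.ν_inv (sub_ne_zero.2 (h n).1)
  have hne : cfRem f x (n + 1) ≠ 0 := inv_ne_zero (sub_ne_zero.2 (h n).1)
  obtain ⟨-, hν⟩ := P.ν_sub_eq_of_lt hne (h (n + 1)).1 (by
    rw [sub_zero, hinv]
    linarith [(h n).2, (h (n + 1)).2])
  rw [deg, ← sub_zero (f (n + 1)), hν, sub_zero, hinv, neg_neg]

lemma HasInfiniteCF.of_ν_sub_gt {f : ℕ → P.K} {x y : P.K} (h : P.HasInfiniteCF f x) {C : ℚ}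
    (hC : ∀ n, 2 * ∑ i ∈ range n, P.ν (cfRem f x i - f i) < C) (hxy : x ≠ y)
    (hνxy : C < P.ν (x - y)) : P.HasInfiniteCF f y := by
  set d := fun n => P.ν (cfRem f x n - f n)
  have hgap : ∀ n, d n < C - 2 * ∑ i ∈ range n, d i := fun n => by
    have := hC (n + 1)
    rw [sum_range_succ] at this
    linarith [(h n).2]
  have key : ∀ n, cfRem f x n ≠ cfRem f y n ∧
      C - 2 * ∑ i ∈ range n, d i < P.ν (cfRem f x n - cfRem f y n) := by
    intro n
    induction n with
    | zero => simpa using ⟨hxy, hνxy⟩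
    | succ n ih =>
      obtain ⟨hne, hlt⟩ := ih
      obtain ⟨hya, hνy⟩ := P.ν_sub_eq_of_lt (h n).1 hne ((hgap n).trans hlt)
      have huv : cfRem f x n - f n ≠ cfRem f y n - f n := by simpa using hne
      refine ⟨fun h' => huv (inv_injective h'), ?_⟩
      change _ < P.ν ((cfRem f x n - f n)⁻¹ - (cfRem f y n - f n)⁻¹)
      rw [P.ν_inv_sub_inv (sub_ne_zero.2 (h n).1) (sub_ne_zero.2 hya) huv,
        sub_sub_sub_cancel_right, hνy, sum_range_succ]
      linarith
  intro n
  obtain ⟨hya, hνy⟩ := P.ν_sub_eq_of_lt (h n).1 (key n).1 ((hgap n).trans (key n).2)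
  exact ⟨hya, hνy ▸ (h n).2⟩

/-- The partial quotient `a` is forced to be the Euclidean quotient `p / q`. -/
lemma exists_ev_div_eq_inv_sub {M : ℕ} (hM : 0 < M) {p q : E[X]} (hq : q ≠ 0) {a : P.K}
    (ha : a ∈ P.Abar) (hne : P.ev M p / P.ev M q ≠ a)
    (hpos : 0 < P.ν (P.ev M p / P.ev M q - a)) :
    ∃ p' q' : E[X], q' ≠ 0 ∧ q'.natDegree < q.natDegree ∧
      (P.ev M p / P.ev M q - a)⁻¹ = P.ev M p' / P.ev M q' := by
  have hevq := P.ev_ne_zero hM hq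
  have hdiv : P.ev M p / P.ev M q - P.ev M (p / q) = P.ev M (p % q) / P.ev M q := by
    have hdm : P.ev M p = P.ev M q * P.ev M (p / q) + P.ev M (p % q) := by
      rw [← map_mul, ← map_add, EuclideanDomain.div_add_mod]
    rw [hdm]
    field_simp
    ring
  have hr : p % q ≠ 0 := by
    intro hr
    rw [hr, map_zero, zero_div, sub_eq_zero] at hdiv
    exact (P.ν_nonpos_of_mem_Abar (sub_mem (hdiv ▸ P.ev_mem_Abar M _) ha)
      (sub_ne_zero.2 hne)).not_gt hpos
  have hdeg : (p % q).natDegree < q.natDegree :=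
    natDegree_lt_natDegree hr (EuclideanDomain.mod_lt p hq)
  have hpos' : 0 < P.ν (P.ev M p / P.ev M q - P.ev M (p / q)) := by
    have hMQ : (0 : ℚ) < M := by exact_mod_cast hM
    have hdegQ : ((p % q).natDegree : ℚ) < q.natDegree := by exact_mod_cast hdeg
    rw [hdiv, P.ν_div (P.ev_ne_zero hM hr) hevq, P.ν_ev hM hr, P.ν_ev hM hq, neg_sub_neg,
      sub_pos]
    exact div_lt_div_of_pos_right hdegQ hMQ
  have hxc : P.ev M p / P.ev M q ≠ P.ev M (p / q) := by
    rw [ne_eq, ← sub_eq_zero, hdiv]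
    exact div_ne_zero (P.ev_ne_zero hM hr) hevq
  obtain rfl := P.eq_of_ν_sub_pos ha (P.ev_mem_Abar M _) hne hxc hpos hpos'
  exact ⟨q, p % q, hr, hdeg, by rw [hdiv, inv_div]⟩

lemma not_hasInfiniteCF_ev_div {M : ℕ} (hM : 0 < M) {f : ℕ → P.K} (hf : ∀ n, f n ∈ P.Abar)
    {p q : E[X]} (hq : q ≠ 0) : ¬ P.HasInfiniteCF f (P.ev M p / P.ev M q) := by
  intro h
  have hdesc : ∀ n, ∃ p' q' : E[X], q' ≠ 0 ∧ q'.natDegree + n ≤ q.natDegree ∧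
      cfRem f (P.ev M p / P.ev M q) n = P.ev M p' / P.ev M q' := by
    intro n
    induction n with
    | zero => exact ⟨p, q, hq, le_rfl, rfl⟩
    | succ n ih =>
      obtain ⟨p', q', hq', hle, heq⟩ := ih
      obtain ⟨hne, hpos⟩ := h n
      rw [heq] at hne hpos
      obtain ⟨p'', q'', hq'', hlt, heq'⟩ := exists_ev_div_eq_inv_sub hM hq' (hf n) hne hpos
      refine ⟨p'', q'', hq'', by omega, ?_⟩
      change (cfRem f _ n - f n)⁻¹ = _
      rw [heq, heq']
  obtain ⟨-, q', -, hle, -⟩ := hdesc (q.natDegree + 1)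
  omega

end ContinuedFractions

end PuiseuxCompletion

open PuiseuxCompletion in
theorem statement14_general {E : Type u} [Field E] (P : PuiseuxCompletion E)
    (f : ℕ → P.K) (hf : ∀ i : ℕ, f i ∈ P.Abar)
    (hsum : Summable (fun i : ℕ => (P.deg (f (i + 1)) : ℝ))) :
    ¬ ∃ z : P.K, ∀ n : ℕ, P.CFBegins f n z := by
  rintro ⟨z, hz⟩
  have hzCF := hasInfiniteCF_of_forall_cfBegins hz
  set d := fun n => P.ν (cfRem f z n - f n)
  have hd : Summable fun n => (d n : ℝ) := hsum.congr fun n => by rw [hzCF.deg_succ]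
  obtain ⟨C, hC⟩ := exists_rat_gt (2 * ∑' n, (d n : ℝ))
  have hbound : ∀ n, 2 * ∑ i ∈ Finset.range n, d i < C := fun n => by
    have := hd.sum_le_tsum (Finset.range n) fun i _ => by exact_mod_cast (hzCF i).2.le
    exact_mod_cast (by push_cast; linarith : ((2 * ∑ i ∈ Finset.range n, d i : ℚ) : ℝ) < C)
  obtain ⟨g, hg, hzg⟩ := P.dense' z C
  have hgCF : P.HasInfiniteCF f g := by
    rcases eq_or_ne z g with rfl | hne
    · exact hzCF
    · exact hzCF.of_ν_sub_gt hbound hne (hzg.resolve_left hne)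
  obtain ⟨M, hM, p, q, hq, rfl⟩ := P.exists_ev_div_of_mem_ktilde (P.mem_ktilde_of_mem_closure hg)
  exact not_hasInfiniteCF_ev_div hM hf hq hgCF

open PuiseuxCompletion in
/-- if `Σ_{n=1}^∞ deg f_n` converges to a finite value, then the
sets `B_{ϖ_n}` of elements whose continued fraction begins with `f₀, …, f_n`
have empty intersection. -/
theorem statement14 {E : Type u} [Field E] (P : PuiseuxCompletion E)
    (f : ℕ → P.K) (hf : ∀ i : ℕ, f i ∈ P.Abar)
    (hdeg : ∀ i : ℕ, 1 ≤ i → 0 < P.deg (f i))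
    (hsum : Summable (fun i : ℕ => (P.deg (f (i + 1)) : ℝ))) :
    ¬ ∃ z : P.K, ∀ n : ℕ, P.CFBegins f n z :=
  statement14_general P f hf hsum
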